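/- Properties of the exponentially weighted test function Φ^{λ,γ}: fix T, λ > 0, γ ≥ 0 and ξ, ζ ∈ C¹([0,T]; ℝ) with ξ₀ = ζ₀ = 0, and assume λ Δ_T^{γ,+} < 1. Then Φ^{λ,γ}(x,y,t) := λ e^{γt} e_g(x,y) / (1 − λ ∫₀^t e^{γs}(ξ̇_s − ζ̇_s) ds) is well defined and is a classical (pointwise differentiable) solution, on {(x,y) ∈ ℝ^N × ℝ^N : d_g(x,y) < Υ} × [0,T], of ∂_t w − γw − (g^{-1}(x) D_x w, D_x w) ξ̇ + (g^{-1}(y) D_y w, D_y w) ζ̇ = 0. -/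

import Mathlib

/-!
The test function separates as `Φ(x, y, t) = c(t) e_g(x, y)` with
`c(t) = λ e^{γt} / (1 - λ ∫₀ᵗ e^{γs} (ξ̇_s - ζ̇_s) ds)`, whose denominator stays positive because
`λ Δ_T^{γ,+} < 1`. The coefficient solves the Riccati equation `ċ = γ c + c² (ξ̇ - ζ̇)`, and by the
eikonal equations the two gradient terms are `c² e_g ξ̇` and `c² e_g ζ̇`, which is the equation.

Differentiability of `e_g` at a point of the strip `{d_g < Υ}` follows from (INJ) once the strip is
open. This holds because `e_g` is upper semicontinuous: moving the endpoints of a fixed `C¹` curve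
by an affine correction changes its energy continuously, and `e_g(x, y)` is the infimum of these
energies over all `C¹` curves.
-/

open Set MeasureTheory
noncomputable section

abbrev EV (N : ℕ) := EuclideanSpace ℝ (Fin N)

def quadForm {N : ℕ} (A : Matrix (Fin N) (Fin N) ℝ) (v w : EV N) : ℝ :=
  ∑ i, ∑ j, A i j * v i * w j

def energy {N : ℕ} (g : EV N → Matrix (Fin N) (Fin N) ℝ) (x y : EV N) : ℝ :=
  sInf { e : ℝ | ∃ γ : ℝ → EV N, ContDiffOn ℝ 1 γ (Icc (0:ℝ) 1) ∧ γ 0 = x ∧ γ 1 = y ∧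
      e = ∫ t in (0:ℝ)..(1:ℝ), (1/4 : ℝ) * quadForm (g (γ t)) (deriv γ t) (deriv γ t) }

def dg {N : ℕ} (g : EV N → Matrix (Fin N) (Fin N) ℝ) (x y : EV N) : ℝ :=
  Real.sqrt (energy g x y)

def ginv {N : ℕ} (g : EV N → Matrix (Fin N) (Fin N) ℝ) (x : EV N) : Matrix (Fin N) (Fin N) ℝ :=
  (g x)⁻¹

def UniformlyElliptic {N : ℕ} (g : EV N → Matrix (Fin N) (Fin N) ℝ) (C : ℝ) : Prop :=
  0 < C ∧ ∀ (x w : EV N), (1/C) * ‖w‖^2 ≤ quadForm (g x) w w ∧ quadForm (g x) w w ≤ C * ‖w‖^2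

def DeltaGammaPlus (ξ ζ : ℝ → ℝ) (γ T : ℝ) : ℝ :=
  sSup ((fun t => ∫ s in (0:ℝ)..t, Real.exp (γ * s) * (deriv ξ s - deriv ζ s)) '' Icc (0:ℝ) T)

/-- The exponentially weighted test function
`Φ^{λ,γ}(x,y,t) = λ e^{γt} e_g(x,y) / (1 − λ∫₀ᵗ e^{γs}(ξ̇_s − ζ̇_s) ds)`. -/
def PhiLG {N : ℕ} (g : EV N → Matrix (Fin N) (Fin N) ℝ) (ξ ζ : ℝ → ℝ) (lam γ : ℝ)
    (x y : EV N) (t : ℝ) : ℝ :=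
  lam * Real.exp (γ * t) * energy g x y /
    (1 - lam * ∫ s in (0:ℝ)..t, Real.exp (γ * s) * (deriv ξ s - deriv ζ s))


open Topology

theorem intervalIntegral.continuous_parametric_intervalIntegral_of_continuousOn {X E : Type*}
    [TopologicalSpace X] [NormedAddCommGroup E] [NormedSpace ℝ E] {f : X → ℝ → E} {a b : ℝ}
    (hab : a ≤ b) (hf : ContinuousOn (Function.uncurry f) (univ ×ˢ Icc a b)) :
    Continuous fun x => ∫ t in a..b, f x t := by
  have hproj (x : X) : ∫ t in a..b, f x t = ∫ t in a..b, f x (projIcc a b hab t) :=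
    intervalIntegral.integral_congr fun t ht => by
      rw [uIcc_of_le hab] at ht
      rw [projIcc_of_mem hab ht]
  simp only [hproj]
  have hproj_cont : Continuous fun q : X × ℝ => (q.1, (projIcc a b hab q.2 : ℝ)) := by fun_prop
  have := hf.comp_continuous hproj_cont fun q => ⟨trivial, (projIcc a b hab q.2).2⟩
  exact intervalIntegral.continuous_parametric_intervalIntegral_of_continuous'
    (f := fun x t => f x (projIcc a b hab t)) this a b

theorem gradient_const_mul {F : Type*} [NormedAddCommGroup F] [InnerProductSpace ℝ F]
    [CompleteSpace F] {f : F → ℝ} {x : F} (hf : DifferentiableAt ℝ f x) (c : ℝ) :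
    gradient (fun z => c * f z) x = c • gradient f x := by
  simp only [gradient, fderiv_const_mul hf c, map_smul]

section QuadForm

variable {N : ℕ}

theorem quadForm_smul_smul (A : Matrix (Fin N) (Fin N) ℝ) (c : ℝ) (v : EV N) :
    quadForm A (c • v) (c • v) = c ^ 2 * quadForm A v v := by
  simp only [quadForm, PiLp.smul_apply, smul_eq_mul, Finset.mul_sum]
  exact Finset.sum_congr rfl fun i _ => Finset.sum_congr rfl fun j _ => by ring

@[fun_prop]
theorem ContinuousOn.quadForm {α : Type*} [TopologicalSpace α] {s : Set α}
    {A : α → Matrix (Fin N) (Fin N) ℝ} {v w : α → EV N} (hA : ContinuousOn A s)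
    (hv : ContinuousOn v s) (hw : ContinuousOn w s) :
    ContinuousOn (fun a => quadForm (A a) (v a) (w a)) s := by
  unfold _root_.quadForm
  fun_prop

theorem UniformlyElliptic.quadForm_nonneg {g : EV N → Matrix (Fin N) (Fin N) ℝ} {C : ℝ}
    (hell : UniformlyElliptic g C) (x w : EV N) : 0 ≤ quadForm (g x) w w :=
  le_trans (by have := hell.1; positivity) (hell.2 x w).1

end QuadForm

section Energy

variable {N : ℕ} {g : EV N → Matrix (Fin N) (Fin N) ℝ} {C : ℝ}

def curveEnergy (g : EV N → Matrix (Fin N) (Fin N) ℝ) (c : ℝ → EV N) : ℝ :=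
  ∫ t in (0:ℝ)..1, (1/4 : ℝ) * quadForm (g (c t)) (deriv c t) (deriv c t)

def withEndpoints (c : ℝ → EV N) (x y : EV N) : ℝ → EV N :=
  fun t => c t + (1 - t) • (x - c 0) + t • (y - c 1)

@[simp]
theorem withEndpoints_zero (c : ℝ → EV N) (x y : EV N) : withEndpoints c x y 0 = x := by
  simp [withEndpoints]

@[simp]
theorem withEndpoints_one (c : ℝ → EV N) (x y : EV N) : withEndpoints c x y 1 = y := by
  simp [withEndpoints]

theorem withEndpoints_self (c : ℝ → EV N) : withEndpoints c (c 0) (c 1) = c := by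
  ext1 t; simp [withEndpoints]

theorem ContDiffOn.withEndpoints {n : WithTop ℕ∞} {s : Set ℝ} {c : ℝ → EV N}
    (hc : ContDiffOn ℝ n c s) (x y : EV N) : ContDiffOn ℝ n (withEndpoints c x y) s :=
  (hc.add ((contDiff_const.sub contDiff_id).smul contDiff_const).contDiffOn).add
    (contDiff_id.smul contDiff_const).contDiffOn

theorem deriv_withEndpoints {c : ℝ → EV N} (hc : ContDiffOn ℝ 1 c (Icc 0 1)) (x y : EV N)
    {t : ℝ} (ht : t ∈ Ioo 0 1) :
    deriv (withEndpoints c x y) t = derivWithin c (Icc 0 1) t + ((y - c 1) - (x - c 0)) := by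
  have hIcc : Icc (0:ℝ) 1 ∈ 𝓝 t := Icc_mem_nhds ht.1 ht.2
  have hc' : HasDerivAt c (deriv c t) t :=
    ((hc.differentiableOn one_ne_zero t (Ioo_subset_Icc_self ht)).differentiableAt hIcc).hasDerivAt
  rw [derivWithin_of_mem_nhds hIcc]
  have hd : HasDerivAt (withEndpoints c x y) (deriv c t + ((y - c 1) - (x - c 0))) t := by
    refine ((hc'.add (((hasDerivAt_id t).const_sub 1).smul_const (x - c 0))).add
      ((hasDerivAt_id t).smul_const (y - c 1))).congr_deriv ?_
    module
  exact hd.deriv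

theorem curveEnergy_nonneg (hell : UniformlyElliptic g C) (c : ℝ → EV N) :
    0 ≤ curveEnergy g c :=
  intervalIntegral.integral_nonneg zero_le_one fun _ _ =>
    mul_nonneg (by norm_num) (hell.quadForm_nonneg _ _)

theorem energy_eq_iInf (g : EV N → Matrix (Fin N) (Fin N) ℝ) (x y : EV N) :
    energy g x y =
      ⨅ c : {c : ℝ → EV N // ContDiffOn ℝ 1 c (Icc 0 1)}, curveEnergy g (withEndpoints c x y) := by
  refine congrArg sInf (Set.ext fun e => ⟨?_, ?_⟩)
  · rintro ⟨c, hc, rfl, rfl, rfl⟩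
    exact ⟨⟨c, hc⟩, by simp only [withEndpoints_self]; rfl⟩
  · rintro ⟨c, rfl⟩
    exact ⟨_, c.2.withEndpoints x y, withEndpoints_zero .., withEndpoints_one .., rfl⟩

theorem continuous_curveEnergy_withEndpoints (hg : Continuous g) {c : ℝ → EV N}
    (hc : ContDiffOn ℝ 1 c (Icc 0 1)) :
    Continuous fun p : EV N × EV N => curveEnergy g (withEndpoints c p.1 p.2) := by
  -- `deriv c` may jump at the endpoints; its continuous version `derivWithin c (Icc 0 1)`
  -- agrees with it on the open interval.
  have hv : ContinuousOn (derivWithin c (Icc 0 1)) (Icc 0 1) :=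
    hc.continuousOn_derivWithin (uniqueDiffOn_Icc one_pos) le_rfl
  have hcurve (p : EV N × EV N) : curveEnergy g (withEndpoints c p.1 p.2) =
      ∫ t in (0:ℝ)..1, (1/4 : ℝ) * quadForm (g (withEndpoints c p.1 p.2 t))
        (derivWithin c (Icc 0 1) t + ((p.2 - c 1) - (p.1 - c 0)))
        (derivWithin c (Icc 0 1) t + ((p.2 - c 1) - (p.1 - c 0))) :=
    intervalIntegral.integral_congr_Ioo_of_le zero_le_one fun t ht => by
      rw [deriv_withEndpoints hc _ _ ht]
  simp only [hcurve]
  refine intervalIntegral.continuous_parametric_intervalIntegral_of_continuousOn zero_le_one ?_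
  unfold withEndpoints
  have := hc.continuousOn
  fun_prop (disch := exact fun _ hq => hq.2)

theorem upperSemicontinuous_energy (hg : Continuous g) (hell : UniformlyElliptic g C) :
    UpperSemicontinuous fun p : EV N × EV N => energy g p.1 p.2 := by
  simp only [energy_eq_iInf]
  exact upperSemicontinuous_ciInf
    (fun _ => ⟨0, forall_mem_range.2 fun _ => curveEnergy_nonneg hell _⟩)
    fun c => (continuous_curveEnergy_withEndpoints hg c.2).upperSemicontinuous

theorem isOpen_setOf_dg_lt (hg : Continuous g) (hell : UniformlyElliptic g C) (Υ : ℝ) :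
    IsOpen {p : EV N × EV N | dg g p.1 p.2 < Υ} :=
  (Real.continuous_sqrt.comp_upperSemicontinuous (upperSemicontinuous_energy hg hell)
    Real.sqrt_monotone).isOpen_preimage Υ

theorem differentiableAt_energy_of_dg_lt (hg : Continuous g) (hell : UniformlyElliptic g C)
    {Υ : ℝ} (hINJ : ContDiffOn ℝ 1 (fun p : EV N × EV N => energy g p.1 p.2)
      {p : EV N × EV N | dg g p.1 p.2 < Υ})
    {x y : EV N} (hxy : dg g x y < Υ) :
    DifferentiableAt ℝ (fun p : EV N × EV N => energy g p.1 p.2) (x, y) :=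
  (hINJ.differentiableOn one_ne_zero _ hxy).differentiableAt
    ((isOpen_setOf_dg_lt hg hell Υ).mem_nhds hxy)

end Energy

section TimeDependence

variable {ξ ζ : ℝ → ℝ} {γ lam : ℝ}

def weightedDrift (ξ ζ : ℝ → ℝ) (γ t : ℝ) : ℝ :=
  ∫ s in (0:ℝ)..t, Real.exp (γ * s) * (deriv ξ s - deriv ζ s)

theorem continuous_weightedDrift_integrand (hξ : ContDiff ℝ 1 ξ) (hζ : ContDiff ℝ 1 ζ) :
    Continuous fun s => Real.exp (γ * s) * (deriv ξ s - deriv ζ s) := by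
  have := hξ.continuous_deriv le_rfl
  have := hζ.continuous_deriv le_rfl
  fun_prop

theorem hasDerivAt_weightedDrift (hξ : ContDiff ℝ 1 ξ) (hζ : ContDiff ℝ 1 ζ) (t : ℝ) :
    HasDerivAt (weightedDrift ξ ζ γ) (Real.exp (γ * t) * (deriv ξ t - deriv ζ t)) t :=
  ((continuous_weightedDrift_integrand hξ hζ).integral_hasStrictDerivAt 0 t).hasDerivAt

theorem weightedDrift_le_deltaGammaPlus (hξ : ContDiff ℝ 1 ξ) (hζ : ContDiff ℝ 1 ζ)
    {T t : ℝ} (ht : t ∈ Icc 0 T) : weightedDrift ξ ζ γ t ≤ DeltaGammaPlus ξ ζ γ T :=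
  have hcont : Continuous (weightedDrift ξ ζ γ) :=
    continuous_iff_continuousAt.2 fun t => (hasDerivAt_weightedDrift hξ hζ t).continuousAt
  le_csSup (isCompact_Icc.image hcont).bddAbove (mem_image_of_mem _ ht)

def phiCoeff (ξ ζ : ℝ → ℝ) (lam γ t : ℝ) : ℝ :=
  lam * Real.exp (γ * t) / (1 - lam * weightedDrift ξ ζ γ t)

theorem PhiLG_eq_phiCoeff_mul {N : ℕ} (g : EV N → Matrix (Fin N) (Fin N) ℝ) (x y : EV N)
    (t : ℝ) : PhiLG g ξ ζ lam γ x y t = phiCoeff ξ ζ lam γ t * energy g x y := by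
  rw [PhiLG, phiCoeff, weightedDrift, div_mul_eq_mul_div]

theorem hasDerivAt_phiCoeff (hξ : ContDiff ℝ 1 ξ) (hζ : ContDiff ℝ 1 ζ) {t : ℝ}
    (hD : 1 - lam * weightedDrift ξ ζ γ t ≠ 0) :
    HasDerivAt (phiCoeff ξ ζ lam γ)
      (γ * phiCoeff ξ ζ lam γ t + phiCoeff ξ ζ lam γ t ^ 2 * (deriv ξ t - deriv ζ t)) t := by
  have hnum : HasDerivAt (fun τ => lam * Real.exp (γ * τ)) (lam * (Real.exp (γ * t) * γ)) t :=
    (((hasDerivAt_id t).const_mul γ).exp.congr_deriv (by simp)).const_mul lam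
  refine (hnum.div (((hasDerivAt_weightedDrift hξ hζ t).const_mul lam).const_sub 1) hD)
    |>.congr_deriv ?_
  simp only [phiCoeff]
  field_simp
  ring

end TimeDependence

theorem stmt6_general
    {N : ℕ}
    (g : EV N → Matrix (Fin N) (Fin N) ℝ)
    (hgC2 : ∀ i j, ContDiff ℝ 2 (fun x => g x i j))
    (C : ℝ) (hell : UniformlyElliptic g C)
    (Υ : ℝ)
    (hINJ : ContDiffOn ℝ 1 (fun p : EV N × EV N => energy g p.1 p.2)
      {p : EV N × EV N | dg g p.1 p.2 < Υ})
    (heik : ∀ x y : EV N, dg g x y < Υ →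
      quadForm (ginv g x) (gradient (fun x' => energy g x' y) x)
          (gradient (fun x' => energy g x' y) x) = energy g x y ∧
      quadForm (ginv g y) (gradient (fun y' => energy g x y') y)
          (gradient (fun y' => energy g x y') y) = energy g x y)
    (T : ℝ) (lam : ℝ) (hlam : 0 < lam) (γ : ℝ)
    (ξ ζ : ℝ → ℝ) (hξ : ContDiff ℝ 1 ξ) (hζ : ContDiff ℝ 1 ζ)
    (hlamΔ : lam * DeltaGammaPlus ξ ζ γ T < 1) :
    -- well-definedness: the denominator is positive on [0,T]
    (∀ t ∈ Icc (0:ℝ) T,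
      0 < 1 - lam * ∫ s in (0:ℝ)..t, Real.exp (γ * s) * (deriv ξ s - deriv ζ s)) ∧
    -- classical solution on the strip
    (∀ (x y : EV N), dg g x y < Υ → ∀ t ∈ Icc (0:ℝ) T,
      HasDerivAt (fun τ => PhiLG g ξ ζ lam γ x y τ)
        (γ * PhiLG g ξ ζ lam γ x y t
          + quadForm (ginv g x) (gradient (fun x' => PhiLG g ξ ζ lam γ x' y t) x)
              (gradient (fun x' => PhiLG g ξ ζ lam γ x' y t) x) * deriv ξ t
          - quadForm (ginv g y) (gradient (fun y' => PhiLG g ξ ζ lam γ x y' t) y)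
              (gradient (fun y' => PhiLG g ξ ζ lam γ x y' t) y) * deriv ζ t) t ∧
      DifferentiableAt ℝ (fun x' => PhiLG g ξ ζ lam γ x' y t) x ∧
      DifferentiableAt ℝ (fun y' => PhiLG g ξ ζ lam γ x y' t) y) := by
  have hden (t : ℝ) (ht : t ∈ Icc 0 T) : 0 < 1 - lam * weightedDrift ξ ζ γ t := by
    nlinarith [weightedDrift_le_deltaGammaPlus (γ := γ) hξ hζ ht]
  refine ⟨hden, fun x y hxy t ht => ?_⟩
  have hg : Continuous g := continuous_pi fun i => continuous_pi fun j => (hgC2 i j).continuous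
  have hE := differentiableAt_energy_of_dg_lt hg hell hINJ hxy
  have hEx : DifferentiableAt ℝ (fun x' => energy g x' y) x := 
    hE.comp (f := fun x' => (x', y)) x (by fun_prop)
  have hEy : DifferentiableAt ℝ (fun y' => energy g x y') y := 
    hE.comp (f := fun y' => (x, y')) y (by fun_prop)
  simp only [PhiLG_eq_phiCoeff_mul]
  rw [gradient_const_mul hEx, gradient_const_mul hEy, quadForm_smul_smul, quadForm_smul_smul,
    (heik x y hxy).1, (heik x y hxy).2]
  exact ⟨((hasDerivAt_phiCoeff hξ hζ (hden t ht).ne').mul_const _).congr_deriv (by ring),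
    hEx.const_mul _, hEy.const_mul _⟩

/-- Lemma 3 of the paper: `Φ^{λ,γ}` is well defined and, on the strip
`{d_g < Υ}`, a classical solution of
`∂ₜw − γw − (g⁻¹(x)D_xw, D_xw) ξ̇ + (g⁻¹(y)D_yw, D_yw) ζ̇ = 0`. -/
theorem stmt6
    {N : ℕ} (hN : 1 ≤ N)
    (g : EV N → Matrix (Fin N) (Fin N) ℝ)
    (hgsymm : ∀ x, (g x).IsSymm)
    (hgC2 : ∀ i j, ContDiff ℝ 2 (fun x => g x i j))
    (C : ℝ) (hell : UniformlyElliptic g C)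
    (Υ : ℝ) (hΥ : 0 < Υ)
    (hINJ : ContDiffOn ℝ 1 (fun p : EV N × EV N => energy g p.1 p.2)
      {p : EV N × EV N | dg g p.1 p.2 < Υ})
    (heik : ∀ x y : EV N, dg g x y < Υ →
      quadForm (ginv g x) (gradient (fun x' => energy g x' y) x)
          (gradient (fun x' => energy g x' y) x) = energy g x y ∧
      quadForm (ginv g y) (gradient (fun y' => energy g x y') y)
          (gradient (fun y' => energy g x y') y) = energy g x y)
    (T : ℝ) (hT : 0 < T) (lam : ℝ) (hlam : 0 < lam) (γ : ℝ) (hγ : 0 ≤ γ)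
    (ξ ζ : ℝ → ℝ) (hξ : ContDiff ℝ 1 ξ) (hζ : ContDiff ℝ 1 ζ)
    (hξ0 : ξ 0 = 0) (hζ0 : ζ 0 = 0)
    (hlamΔ : lam * DeltaGammaPlus ξ ζ γ T < 1) :
    -- well-definedness: the denominator is positive on [0,T]
    (∀ t ∈ Icc (0:ℝ) T,
      0 < 1 - lam * ∫ s in (0:ℝ)..t, Real.exp (γ * s) * (deriv ξ s - deriv ζ s)) ∧
    -- classical solution on the strip
    (∀ (x y : EV N), dg g x y < Υ → ∀ t ∈ Icc (0:ℝ) T,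
      HasDerivAt (fun τ => PhiLG g ξ ζ lam γ x y τ)
        (γ * PhiLG g ξ ζ lam γ x y t
          + quadForm (ginv g x) (gradient (fun x' => PhiLG g ξ ζ lam γ x' y t) x)
              (gradient (fun x' => PhiLG g ξ ζ lam γ x' y t) x) * deriv ξ t
          - quadForm (ginv g y) (gradient (fun y' => PhiLG g ξ ζ lam γ x y' t) y)
              (gradient (fun y' => PhiLG g ξ ζ lam γ x y' t) y) * deriv ζ t) t ∧
      DifferentiableAt ℝ (fun x' => PhiLG g ξ ζ lam γ x' y t) x ∧
      DifferentiableAt ℝ (fun y' => PhiLG g ξ ζ lam γ x y' t) y) :=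
  stmt6_general g hgC2 C hell Υ hINJ heik T lam hlam γ ξ ζ hξ hζ hlamΔ
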